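/- arXiv:0804.2038 — 2 statements merged into one kernel-verified Lean document; each statement's English description precedes it below -/
import Mathlib

section
/- If n = 7^c ∏ p_i^{v_i} ∏ q_j^{w_j} with p_i ≡ 1,2,4 (mod 7) and q_j ≡ 3,5,6 (mod 7), then ∑_{d|n} d^2 ((n/d)/7) = 7^{2c} ∏_i (1 - p_i^{2v_i+2})/(1 - p_i^2) · ∏_j ((-1)^{w_j} + q_j^{2w_j+2})/(1 + q_j^2), where (m/7) is the Legendre symbol. -/
open PowerSeries Finset

instance : Fact (Nat.Prime 7) := ⟨by norm_num⟩

/-!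
The sum is the Dirichlet convolution of `d ↦ d²` with the Legendre character `χ = (· / 7)`.
Both are completely multiplicative, so the convolution is multiplicative, and at a prime power
it is the geometric sum `∑_{i ≤ m} p^{2i} χ(p)^{m-i} = (p^{2m+2} - χ(p)^{m+1}) / (p² - χ(p))`.
The residue of `p` mod 7 decides whether `χ(p)` is `0`, `1` or `-1`, which gives the three
kinds of factors.
-/

open ArithmeticFunction

namespace ArithmeticFunction

variable {R : Type*}

theorem mul_apply_prime_pow [Semiring R] (f g : ArithmeticFunction R) {p : ℕ} (hp : p.Prime)
    (m : ℕ) : (f * g) (p ^ m) = ∑ i ∈ range (m + 1), f (p ^ i) * g (p ^ (m - i)) := by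
  rw [mul_apply, Nat.sum_divisorsAntidiagonal (fun a b => f a * g b),
    Nat.sum_divisors_prime_pow hp]
  refine sum_congr rfl fun i hi => ?_
  rw [Nat.pow_div (Nat.lt_succ_iff.mp (mem_range.mp hi)) hp.pos]

theorem mul_apply_prime_pow_mul_sub [CommRing R] (f g : ArithmeticFunction R) {p : ℕ}
    (hp : p.Prime) (hf : ∀ i, f (p ^ i) = f p ^ i) (hg : ∀ i, g (p ^ i) = g p ^ i) (m : ℕ) :
    (f * g) (p ^ m) * (f p - g p) = f p ^ (m + 1) - g p ^ (m + 1) := by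
  rw [mul_apply_prime_pow f g hp, ← geom_sum₂_mul]
  simp only [hf, hg, add_tsub_cancel_right]

theorem IsMultiplicative.map_prod_prime_pow [CommMonoidWithZero R] {f : ArithmeticFunction R}
    (hf : f.IsMultiplicative) {S : Finset ℕ} (hS : ∀ p ∈ S, p.Prime) (e : ℕ → ℕ) :
    f (∏ p ∈ S, p ^ e p) = ∏ p ∈ S, f (p ^ e p) :=
  hf.map_prod _ S fun p hp q hq hpq =>
    Nat.Coprime.pow _ _ ((Nat.coprime_primes (hS p hp) (hS q hq)).mpr hpq)

end ArithmeticFunction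

theorem Nat.coprime_prod_pow_of_disjoint {S T : Finset ℕ} (hS : ∀ p ∈ S, p.Prime)
    (hT : ∀ q ∈ T, q.Prime) (h : Disjoint S T) (a b : ℕ → ℕ) :
    Nat.Coprime (∏ p ∈ S, p ^ a p) (∏ q ∈ T, q ^ b q) :=
  Nat.Coprime.prod_left fun p hp => Nat.Coprime.prod_right fun q hq =>
    Nat.Coprime.pow _ _ <| (Nat.coprime_primes (hS p hp) (hT q hq)).mpr
      fun e => disjoint_left.mp h hp (e ▸ hq)

noncomputable def legendreSymFun (ℓ : ℕ) [Fact ℓ.Prime] : ArithmeticFunction ℤ :=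
  ⟨fun n => legendreSym ℓ n, by simp [legendreSym.at_zero]⟩

noncomputable def sigmaLegendre (ℓ : ℕ) [Fact ℓ.Prime] (k : ℕ) : ArithmeticFunction ℚ :=
  ↑(pow k) * ↑(legendreSymFun ℓ)

section Legendre

variable (ℓ : ℕ) [Fact ℓ.Prime]

theorem legendreSym_le_one (a : ℤ) : legendreSym ℓ a ≤ 1 := by
  by_cases ha : (a : ZMod ℓ) = 0
  · rw [(legendreSym.eq_zero_iff ℓ a).mpr ha]; norm_num
  · rcases legendreSym.eq_one_or_neg_one ℓ ha with h | h <;> rw [h]; norm_num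

theorem legendreSymFun_apply (n : ℕ) : legendreSymFun ℓ n = legendreSym ℓ n := rfl

theorem legendreSymFun_mul (m n : ℕ) :
    legendreSymFun ℓ (m * n) = legendreSymFun ℓ m * legendreSymFun ℓ n := by
  simp only [legendreSymFun_apply, Nat.cast_mul, legendreSym.mul]

theorem legendreSymFun_pow (m i : ℕ) : legendreSymFun ℓ (m ^ i) = legendreSymFun ℓ m ^ i := by
  induction i with
  | zero => simp [legendreSymFun_apply, legendreSym.at_one]
  | succ i ih => rw [pow_succ, legendreSymFun_mul, ih, pow_succ]

theorem isMultiplicative_legendreSymFun : (legendreSymFun ℓ).IsMultiplicative :=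
  ⟨by simp [legendreSymFun_apply, legendreSym.at_one], fun _ => legendreSymFun_mul ℓ _ _⟩

theorem sigmaLegendre_apply (k n : ℕ) :
    sigmaLegendre ℓ k n =
      ∑ d ∈ n.divisors, (d : ℚ) ^ k * (legendreSym ℓ ((n / d : ℕ) : ℤ) : ℚ) := by
  rw [sigmaLegendre, mul_apply, Nat.sum_divisorsAntidiagonal
    (fun a b => (pow k : ArithmeticFunction ℚ) a * (legendreSymFun ℓ : ArithmeticFunction ℚ) b)]
  refine sum_congr rfl fun d hd => ?_
  simp [pow_apply, intCoe_apply, legendreSymFun_apply, Nat.ne_of_gt (Nat.pos_of_mem_divisors hd)]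

theorem isMultiplicative_sigmaLegendre (k : ℕ) : (sigmaLegendre ℓ k).IsMultiplicative :=
  isMultiplicative_pow.natCast.mul (isMultiplicative_legendreSymFun ℓ).intCast

theorem sigmaLegendre_apply_prime_pow {k : ℕ} (hk : k ≠ 0) {p : ℕ} (hp : p.Prime) (m : ℕ) :
    sigmaLegendre ℓ k (p ^ m) =
      ((p : ℚ) ^ (k * (m + 1)) - (legendreSym ℓ p : ℚ) ^ (m + 1)) /
        ((p : ℚ) ^ k - legendreSym ℓ p) := by
  have hχ : (legendreSym ℓ p : ℚ) < (p : ℚ) ^ k := by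
    have h1 : (legendreSym ℓ p : ℚ) ≤ 1 := by exact_mod_cast legendreSym_le_one ℓ p
    have h2 : (1 : ℚ) < (p : ℚ) ^ k := one_lt_pow₀ (by exact_mod_cast hp.one_lt) hk
    linarith
  have hpow (i : ℕ) : (pow k : ArithmeticFunction ℚ) (p ^ i) = ((p : ℚ) ^ k) ^ i := by
    simp [pow_apply, hk, pow_right_comm]
  have hχpow (i : ℕ) :
      (legendreSymFun ℓ : ArithmeticFunction ℚ) (p ^ i) = (legendreSym ℓ p : ℚ) ^ i := by
    rw [intCoe_apply, legendreSymFun_pow, Int.cast_pow, legendreSymFun_apply]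
  have hpow₁ := hpow 1
  have hχpow₁ := hχpow 1
  rw [pow_one, pow_one] at hpow₁ hχpow₁
  have key := mul_apply_prime_pow_mul_sub (pow k : ArithmeticFunction ℚ)
    (legendreSymFun ℓ : ArithmeticFunction ℚ) hp (fun i => by rw [hpow, hpow₁])
    (fun i => by rw [hχpow, hχpow₁]) m
  rw [hpow₁, hχpow₁] at key
  rw [eq_div_iff (sub_ne_zero.mpr hχ.ne'), pow_mul]
  exact key

theorem sigmaLegendre_apply_self_pow {k : ℕ} (hk : k ≠ 0) (m : ℕ) :
    sigmaLegendre ℓ k (ℓ ^ m) = (ℓ : ℚ) ^ (k * m) := by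
  have hℓ : legendreSym ℓ (ℓ : ℤ) = 0 := (legendreSym.eq_zero_iff ℓ ℓ).mpr (by simp)
  have hℓk : (ℓ : ℚ) ^ k ≠ 0 := pow_ne_zero _ (by exact_mod_cast (Fact.out : ℓ.Prime).ne_zero)
  rw [sigmaLegendre_apply_prime_pow ℓ hk Fact.out, hℓ, Int.cast_zero, zero_pow m.succ_ne_zero,
    sub_zero, sub_zero, pow_mul, pow_mul, pow_succ, mul_div_cancel_right₀ _ hℓk]

theorem sigmaLegendre_two_apply_prime_pow_of_eq_one {p : ℕ} (hp : p.Prime)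
    (h : legendreSym ℓ p = 1) (m : ℕ) :
    sigmaLegendre ℓ 2 (p ^ m) = (1 - (p : ℚ) ^ (2 * m + 2)) / (1 - (p : ℚ) ^ 2) := by
  rw [sigmaLegendre_apply_prime_pow ℓ two_ne_zero hp, h, ← neg_div_neg_eq]
  congr 1 <;> push_cast <;> ring

theorem sigmaLegendre_two_apply_prime_pow_of_eq_neg_one {p : ℕ} (hp : p.Prime)
    (h : legendreSym ℓ p = -1) (m : ℕ) :
    sigmaLegendre ℓ 2 (p ^ m) = ((-1) ^ m + (p : ℚ) ^ (2 * m + 2)) / (1 + (p : ℚ) ^ 2) := by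
  rw [sigmaLegendre_apply_prime_pow ℓ two_ne_zero hp, h]
  congr 1 <;> push_cast <;> ring

end Legendre

theorem legendreSym_seven_of_mod_eq_one_two_four {p : ℕ}
    (h : p % 7 = 1 ∨ p % 7 = 2 ∨ p % 7 = 4) : legendreSym 7 p = 1 := by
  rw [legendreSym.mod, ← Int.natCast_mod]
  rcases h with h | h | h <;> rw [h] <;> decide

theorem legendreSym_seven_of_mod_eq_three_five_six {p : ℕ}
    (h : p % 7 = 3 ∨ p % 7 = 5 ∨ p % 7 = 6) : legendreSym 7 p = -1 := by
  rw [legendreSym.mod, ← Int.natCast_mod]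
  rcases h with h | h | h <;> rw [h] <;> decide

theorem K_coeff_formula_general (n c : ℕ) (P Q : Finset ℕ) (v w : ℕ → ℕ)
    (hP : ∀ p ∈ P, Nat.Prime p ∧ (p % 7 = 1 ∨ p % 7 = 2 ∨ p % 7 = 4))
    (hQ : ∀ q ∈ Q, Nat.Prime q ∧ (q % 7 = 3 ∨ q % 7 = 5 ∨ q % 7 = 6))
    (hn : n = 7 ^ c * (∏ p ∈ P, p ^ v p) * (∏ q ∈ Q, q ^ w q)) :
    (∑ d ∈ n.divisors, (d : ℚ) ^ 2 * (legendreSym 7 ((n / d : ℕ) : ℤ) : ℚ)) =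
      7 ^ (2 * c) * (∏ p ∈ P, (1 - (p : ℚ) ^ (2 * v p + 2)) / (1 - (p : ℚ) ^ 2)) * (∏ q ∈ Q, ((-1) ^ w q + (q : ℚ) ^ (2 * w q + 2)) / (1 + (q : ℚ) ^ 2)) := by
  have hPprime (p) (hp : p ∈ P) : p.Prime := (hP p hp).1
  have hQprime (q) (hq : q ∈ Q) : q.Prime := (hQ q hq).1
  have hPQ : Disjoint P Q :=
    disjoint_left.mpr fun p hp hq => by have := (hP p hp).2; have := (hQ p hq).2; omega
  have hcop7 (T : Finset ℕ) (hT : ∀ q ∈ T, q.Prime) (h7T : 7 ∉ T) (b : ℕ → ℕ) :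
      Nat.Coprime (7 ^ c) (∏ q ∈ T, q ^ b q) := by
    simpa using Nat.coprime_prod_pow_of_disjoint (fun p hp => mem_singleton.mp hp ▸ Fact.out)
      hT (disjoint_singleton_left.mpr h7T) (fun _ => c) b
  have hF := isMultiplicative_sigmaLegendre 7 2
  rw [← sigmaLegendre_apply, hn, hF.map_mul_of_coprime, hF.map_mul_of_coprime,
    hF.map_prod_prime_pow hPprime, hF.map_prod_prime_pow hQprime,
    sigmaLegendre_apply_self_pow 7 two_ne_zero,
    prod_congr rfl fun p hp => sigmaLegendre_two_apply_prime_pow_of_eq_one 7 (hPprime p hp)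
      (legendreSym_seven_of_mod_eq_one_two_four (hP p hp).2) (v p),
    prod_congr rfl fun q hq => sigmaLegendre_two_apply_prime_pow_of_eq_neg_one 7 (hQprime q hq)
      (legendreSym_seven_of_mod_eq_three_five_six (hQ q hq).2) (w q)]
  · norm_num
  · exact hcop7 P hPprime (fun h => by have := (hP 7 h).2; omega) v
  · exact (hcop7 Q hQprime (fun h => by have := (hQ 7 h).2; omega) w).mul_left
      (Nat.coprime_prod_pow_of_disjoint hPprime hQprime hPQ v w)

/-- If `n = 7^c * ∏ p_i^{v_i} * ∏ q_j^{w_j}` with `p_i ≡ 1,2,4 (mod 7)`,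
`q_j ≡ 3,5,6 (mod 7)` and `b = ∑ w_j`, then
`∑_{d|n} d^2 ((n/d)/7) = 7^{2c} ∏_i (1-p_i^{2v_i+2})/(1-p_i^2)
  * ∏_j ((-1)^{w_j}+q_j^{2w_j+2})/(1+q_j^2)`. -/
theorem K_coeff_formula (n c b : ℕ) (P Q : Finset ℕ) (v w : ℕ → ℕ)
    (hP : ∀ p ∈ P, Nat.Prime p ∧ (p % 7 = 1 ∨ p % 7 = 2 ∨ p % 7 = 4))
    (hQ : ∀ q ∈ Q, Nat.Prime q ∧ (q % 7 = 3 ∨ q % 7 = 5 ∨ q % 7 = 6))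
    (hn : n = 7 ^ c * (∏ p ∈ P, p ^ v p) * (∏ q ∈ Q, q ^ w q))
    (hb : b = ∑ q ∈ Q, w q) :
    (∑ d ∈ n.divisors, (d : ℚ) ^ 2 * (legendreSym 7 ((n / d : ℕ) : ℤ) : ℚ)) =
      7 ^ (2 * c) * (∏ p ∈ P, (1 - (p : ℚ) ^ (2 * v p + 2)) / (1 - (p : ℚ) ^ 2)) * (∏ q ∈ Q, ((-1) ^ w q + (q : ℚ) ^ (2 * w q + 2)) / (1 + (q : ℚ) ^ 2)) :=
  K_coeff_formula_general n c P Q v w hP hQ hn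
end

section
/- For every n ≥ 1, ∑_{d|n} d^2 ((n/d)/7) > 0, where (m/7) is the Legendre symbol modulo 7. -/
open PowerSeries Finset

/-! The divisor `d = n` contributes `n² · (1/7) = n²`, and every other term is at least `-d²`.
Writing a proper divisor as `d = n / e` with `1 < e ≤ n`, the squares of the proper divisors sum
to at most `n² ∑_{1 < e ≤ n} e⁻² ≤ n² (1 - 1/n) < n²`, so the total is positive. -/

theorem legendreSym_neg_one_le (p : ℕ) [Fact p.Prime] (a : ℤ) : -1 ≤ legendreSym p a := by
  rw [jacobiSym.legendreSym.to_jacobiSym]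
  rcases jacobiSym.trichotomy a p with h | h | h <;> rw [h] <;> norm_num

namespace Nat

theorem sum_inv_sq_div_properDivisors_le (n : ℕ) :
    ∑ d ∈ n.properDivisors, (((n / d : ℕ) : ℚ) ^ 2)⁻¹ ≤ 1 - (n : ℚ)⁻¹ := by
  rcases eq_or_ne n 0 with rfl | hn
  · simp
  have hinj : Set.InjOn (n / ·) n.properDivisors := fun a ha b hb hab => by
    rw [← Nat.div_div_self (mem_properDivisors.1 ha).1 hn,
      ← Nat.div_div_self (mem_properDivisors.1 hb).1 hn]
    exact congrArg (n / ·) hab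
  have himage : n.properDivisors.image (n / ·) ⊆ Ioc 1 n := by
    intro e he
    obtain ⟨d, hd, rfl⟩ := mem_image.1 he
    exact mem_Ioc.2 ⟨one_lt_div_of_mem_properDivisors hd, Nat.div_le_self n d⟩
  calc ∑ d ∈ n.properDivisors, (((n / d : ℕ) : ℚ) ^ 2)⁻¹
      = ∑ e ∈ n.properDivisors.image (n / ·), ((e : ℚ) ^ 2)⁻¹ := by rw [sum_image hinj]
    _ ≤ ∑ e ∈ Ioc 1 n, ((e : ℚ) ^ 2)⁻¹ :=
        sum_le_sum_of_subset_of_nonneg himage fun _ _ _ => by positivity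
    _ ≤ 1 - (n : ℚ)⁻¹ := by
        simpa using sum_Ioc_inv_sq_le_sub (α := ℚ) one_ne_zero (one_le_iff_ne_zero.2 hn)

theorem sum_sq_properDivisors_lt {n : ℕ} (hn : n ≠ 0) :
    ∑ d ∈ n.properDivisors, d ^ 2 < n ^ 2 := by
  have hn' : (0 : ℚ) < n := by exact_mod_cast pos_of_ne_zero hn
  have hsq : ∀ d ∈ n.properDivisors, ((d : ℕ) : ℚ) ^ 2 = n ^ 2 * (((n / d : ℕ) : ℚ) ^ 2)⁻¹ := by
    intro d hd
    obtain ⟨hdvd, -⟩ := mem_properDivisors.1 hd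
    have hd0 : (d : ℚ) ≠ 0 := by exact_mod_cast (pos_of_mem_properDivisors hd).ne'
    rw [Nat.cast_div hdvd hd0]
    field_simp
  suffices (∑ d ∈ n.properDivisors, d ^ 2 : ℚ) < n ^ 2 by exact_mod_cast this
  calc (∑ d ∈ n.properDivisors, d ^ 2 : ℚ)
      = n ^ 2 * ∑ d ∈ n.properDivisors, (((n / d : ℕ) : ℚ) ^ 2)⁻¹ := by
        rw [mul_sum]; exact sum_congr rfl hsq
    _ ≤ n ^ 2 * (1 - (n : ℚ)⁻¹) := by
        gcongr; exact sum_inv_sq_div_properDivisors_le n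
    _ < n ^ 2 := by
        rw [mul_sub, mul_one]
        exact sub_lt_self _ (by positivity)

end Nat

theorem sum_divisors_sq_mul_pos {R : Type*} [CommRing R] [LinearOrder R] [IsStrictOrderedRing R]
    (χ : ℕ → R) (hχ1 : χ 1 = 1) (hχ : ∀ m, -1 ≤ χ m) {n : ℕ} (hn : n ≠ 0) :
    0 < ∑ d ∈ n.divisors, (d : R) ^ 2 * χ (n / d) := by
  rw [← Nat.cons_self_properDivisors hn, sum_cons, Nat.div_self (Nat.pos_of_ne_zero hn), hχ1,
    mul_one]
  have hterm : ∀ d ∈ n.properDivisors, -(d : R) ^ 2 ≤ (d : R) ^ 2 * χ (n / d) := fun d _ => by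
    simpa using mul_le_mul_of_nonneg_left (hχ (n / d)) (sq_nonneg (d : R))
  have hlower : -∑ d ∈ n.properDivisors, (d : R) ^ 2 ≤
      ∑ d ∈ n.properDivisors, (d : R) ^ 2 * χ (n / d) := by
    rw [← sum_neg_distrib]; exact sum_le_sum hterm
  have hbound : ∑ d ∈ n.properDivisors, (d : R) ^ 2 < (n : R) ^ 2 := by
    exact_mod_cast Nat.sum_sq_properDivisors_lt hn
  linarith

/-- For every `n ≥ 1`, `∑_{d|n} d^2 ((n/d)/7) > 0`, where `(m/7)` is the Legendre
symbol modulo 7. -/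
theorem K_coeff_pos (n : ℕ) (hn : 1 ≤ n) :
    0 < ∑ d ∈ n.divisors, (d : ℤ) ^ 2 * legendreSym 7 ((n / d : ℕ) : ℤ) :=
  sum_divisors_sq_mul_pos (fun m => legendreSym 7 (m : ℤ)) (legendreSym.at_one 7)
    (fun m => legendreSym_neg_one_le 7 m) (by omega)
end
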